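/- Let (A,B) be a definite pencil and X an invertible matrix such that X^H A X = diag(α₁,…,αₙ) and X^H B X = diag(β₁,…,βₙ) with αᵢ, βᵢ real and αᵢ² + βᵢ² = 1 for all i. Then ||X||₂² ≤ γ(A,B)^{-1} and ||X^{-1}||₂² ≤ γ(A,B)^{-1} · ||(A,B)||₂², and consequently κ₂(X) ≤ ||(A,B)||₂ / γ(A,B). -/

import Mathlib

open Matrix MeasureTheory ProbabilityTheory
open scoped Classical

noncomputable def specNorm {m n : Type*} [Fintype m] [Fintype n] [DecidableEq n]
    (A : Matrix m n ℂ) : ℝ :=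
  ‖LinearMap.toContinuousLinearMap (Matrix.toEuclideanLin A)‖

noncomputable def crawford {n : ℕ} (A B : Matrix (Fin n) (Fin n) ℂ) : ℝ :=
  sInf { r | ∃ x : EuclideanSpace ℂ (Fin n), ‖x‖ = 1 ∧
    r = ‖star (x : Fin n → ℂ) ⬝ᵥ (A + Complex.I • B).mulVec x‖ }

noncomputable def pencilNorm {n : ℕ} (A B : Matrix (Fin n) (Fin n) ℂ) : ℝ :=
  specNorm (Matrix.fromCols A B)

def symPseudo {n : ℕ} (ε : ℝ) (A B : Matrix (Fin n) (Fin n) ℂ) : Set ℂ :=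
  { z | ∃ E F : Matrix (Fin n) (Fin n) ℂ, E.IsHermitian ∧ F.IsHermitian ∧
      Real.sqrt (specNorm E ^ 2 + specNorm F ^ 2) ≤ ε ∧
      ∃ u : Fin n → ℂ, u ≠ 0 ∧ (A + E).mulVec u = z • (B + F).mulVec u }

noncomputable def smin {n : ℕ} (M : Matrix (Fin n) (Fin n) ℂ) : ℝ :=
  sInf { r | ∃ x : EuclideanSpace ℂ (Fin n), ‖x‖ = 1 ∧ r = ‖Matrix.toEuclideanLin M x‖ }

def pencilEigs {n : ℕ} (A B : Matrix (Fin n) (Fin n) ℂ) : Set ℝ :=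
  { lam | ∃ u : Fin n → ℂ, u ≠ 0 ∧ A.mulVec u = (lam : ℂ) • B.mulVec u }

/-! With `C = A + iB`, the congruence `Xᴴ C X = D = diag(αᵢ + iβᵢ)` has unimodular diagonal, so
`γ ‖Xv‖² ≤ |(Xv)ᴴ C (Xv)| = |vᴴ D v| ≤ ‖v‖²` for every `v`, i.e. `‖X‖² ≤ γ⁻¹`.
For the inverse, `αᵢ² + βᵢ² = 1` splits
`‖X⁻¹u‖² = ‖D_α X⁻¹u‖² + ‖D_β X⁻¹u‖² = ‖Xᴴ A u‖² + ‖Xᴴ B u‖² ≤ ‖X‖² (‖Au‖² + ‖Bu‖²)`,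
and `‖Au‖² + ‖Bu‖² ≤ ‖(A, B)‖² ‖u‖²` because `[A; B] = [A, B]ᴴ` for Hermitian `A`, `B`.
Hence `‖X⁻¹‖ ≤ ‖X‖ ‖(A, B)‖`, from which the remaining two bounds follow. -/

open WithLp

section SpecNorm

variable {m n : Type*} [Fintype m] [Fintype n] [DecidableEq n]

lemma specNorm_nonneg (M : Matrix m n ℂ) : 0 ≤ specNorm M := norm_nonneg _

open scoped Matrix.Norms.L2Operator in
lemma specNorm_conjTranspose [DecidableEq m] (M : Matrix m n ℂ) : specNorm Mᴴ = specNorm M :=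
  l2_opNorm_conjTranspose M

open scoped Matrix.Norms.L2Operator in
lemma norm_mulVec_le_specNorm (M : Matrix m n ℂ) (v : n → ℂ) :
    ‖toLp 2 (M *ᵥ v)‖ ≤ specNorm M * ‖toLp 2 v‖ :=
  l2_opNorm_mulVec M (toLp 2 v)

lemma norm_sq_mulVec_le_specNorm (M : Matrix m n ℂ) (v : n → ℂ) :
    ‖toLp 2 (M *ᵥ v)‖ ^ 2 ≤ specNorm M ^ 2 * ‖toLp 2 v‖ ^ 2 := by
  rw [← mul_pow]
  exact pow_le_pow_left₀ (norm_nonneg _) (norm_mulVec_le_specNorm M v) 2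

lemma specNorm_sq_le_of_forall {M : Matrix m n ℂ} {C : ℝ} (hC : 0 ≤ C)
    (h : ∀ v, ‖toLp 2 (M *ᵥ v)‖ ^ 2 ≤ C * ‖toLp 2 v‖ ^ 2) : specNorm M ^ 2 ≤ C := by
  have hM : specNorm M ≤ √C := by
    refine ContinuousLinearMap.opNorm_le_bound _ (Real.sqrt_nonneg C) fun x => ?_
    refine le_of_pow_le_pow_left₀ two_ne_zero (by positivity) ?_
    rw [mul_pow, Real.sq_sqrt hC]
    exact h (ofLp x)
  calc specNorm M ^ 2 ≤ √C ^ 2 := pow_le_pow_left₀ (specNorm_nonneg M) hM 2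
    _ = C := Real.sq_sqrt hC

lemma norm_sq_add_norm_sq_le_specNorm_fromRows {m' : Type*} [Fintype m'] (A : Matrix m n ℂ)
    (B : Matrix m' n ℂ) (v : n → ℂ) :
    ‖toLp 2 (A *ᵥ v)‖ ^ 2 + ‖toLp 2 (B *ᵥ v)‖ ^ 2
      ≤ specNorm (fromRows A B) ^ 2 * ‖toLp 2 v‖ ^ 2 := by
  have h := norm_sq_mulVec_le_specNorm (fromRows A B) v
  rw [fromRows_mulVec] at h
  simpa only [EuclideanSpace.norm_sq_eq, Fintype.sum_sum_type, ofLp_toLp, Sum.elim_inl,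
    Sum.elim_inr] using h

end SpecNorm

section Diagonal

variable {ι : Type*} [Fintype ι] [DecidableEq ι]

lemma norm_dotProduct_diagonal_mulVec_le {d : ι → ℂ} (hd : ∀ i, ‖d i‖ ≤ 1) (v : ι → ℂ) :
    ‖star v ⬝ᵥ diagonal d *ᵥ v‖ ≤ ‖toLp 2 v‖ ^ 2 := by
  rw [EuclideanSpace.norm_sq_eq, dotProduct]
  simp only [Pi.star_apply, mulVec_diagonal]
  refine (norm_sum_le _ _).trans (Finset.sum_le_sum fun i _ => ?_)
  calc ‖star (v i) * (d i * v i)‖ = ‖d i‖ * ‖v i‖ ^ 2 := by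
        rw [norm_mul, norm_mul, norm_star]; ring
    _ ≤ ‖v i‖ ^ 2 := mul_le_of_le_one_left (by positivity) (hd i)

lemma norm_sq_eq_norm_sq_diagonal_mulVec_add {α β : ι → ℝ} (hαβ : ∀ i, α i ^ 2 + β i ^ 2 = 1)
    (v : ι → ℂ) :
    ‖toLp 2 v‖ ^ 2 = ‖toLp 2 (diagonal (fun i => (α i : ℂ)) *ᵥ v)‖ ^ 2
      + ‖toLp 2 (diagonal (fun i => (β i : ℂ)) *ᵥ v)‖ ^ 2 := by
  simp only [EuclideanSpace.norm_sq_eq, mulVec_diagonal, norm_mul, Complex.norm_real,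
    Real.norm_eq_abs, mul_pow, sq_abs, ← Finset.sum_add_distrib, ← add_mul, hαβ, one_mul]

end Diagonal

lemma dotProduct_mulVec_real_smul {ι : Type*} [Fintype ι] (M : Matrix ι ι ℂ) (r : ℝ)
    (v : ι → ℂ) : star (r • v) ⬝ᵥ M *ᵥ (r • v) = (r ^ 2 : ℝ) • (star v ⬝ᵥ M *ᵥ v) := by
  rw [star_smul, mulVec_smul, dotProduct_smul, smul_dotProduct, smul_smul, star_trivial, sq]

lemma crawford_le {n : ℕ} (A B : Matrix (Fin n) (Fin n) ℂ) {x : EuclideanSpace ℂ (Fin n)}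
    (hx : ‖x‖ = 1) : crawford A B ≤ ‖star (ofLp x) ⬝ᵥ (A + Complex.I • B) *ᵥ ofLp x‖ :=
  csInf_le ⟨0, by rintro _ ⟨x, -, rfl⟩; positivity⟩ ⟨x, hx, rfl⟩

lemma crawford_mul_norm_sq_le {n : ℕ} (A B : Matrix (Fin n) (Fin n) ℂ) (v : Fin n → ℂ) :
    crawford A B * ‖toLp 2 v‖ ^ 2 ≤ ‖star v ⬝ᵥ (A + Complex.I • B) *ᵥ v‖ := by
  rcases eq_or_ne (toLp 2 v) 0 with hv | hv
  · simp [hv]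
  set r := ‖toLp 2 v‖
  have hr : 0 < r := norm_pos_iff.mpr hv
  have hunit : ‖toLp 2 (r⁻¹ • v)‖ = 1 := by
    rw [toLp_smul, norm_smul, Real.norm_of_nonneg (inv_nonneg.mpr hr.le), inv_mul_cancel₀ hr.ne']
  have hle := crawford_le A B hunit
  rw [ofLp_toLp, dotProduct_mulVec_real_smul, norm_smul, Real.norm_of_nonneg (by positivity),
    inv_pow, inv_mul_eq_div, le_div_iff₀ (by positivity)] at hle
  exact hle

lemma pencilNorm_eq_specNorm_fromRows {n : ℕ} {A B : Matrix (Fin n) (Fin n) ℂ}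
    (hA : A.IsHermitian) (hB : B.IsHermitian) : pencilNorm A B = specNorm (fromRows A B) := by
  rw [pencilNorm, ← specNorm_conjTranspose, conjTranspose_fromCols_eq_fromRows_conjTranspose,
    hA.eq, hB.eq]

lemma dotProduct_mulVec_conjTranspose_mul_mul {R ι κ : Type*} [CommSemiring R] [StarRing R]
    [Fintype ι] [Fintype κ] (M : Matrix ι ι R) (X : Matrix ι κ R) (v : κ → R) :
    star v ⬝ᵥ (Xᴴ * M * X) *ᵥ v = star (X *ᵥ v) ⬝ᵥ M *ᵥ (X *ᵥ v) := by
  symm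
  rw [star_mulVec, mulVec_mulVec, dotProduct_mulVec, vecMul_vecMul, ← dotProduct_mulVec,
    ← Matrix.mul_assoc]

lemma specNorm_sq_le_inv_crawford {n : ℕ} {A B X : Matrix (Fin n) (Fin n) ℂ} {d : Fin n → ℂ}
    (hγ : 0 < crawford A B) (hd : ∀ i, ‖d i‖ ≤ 1)
    (hX : Xᴴ * (A + Complex.I • B) * X = diagonal d) : specNorm X ^ 2 ≤ (crawford A B)⁻¹ := by
  refine specNorm_sq_le_of_forall (inv_nonneg.mpr hγ.le) fun v => ?_
  rw [inv_mul_eq_div, le_div_iff₀' hγ]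
  calc crawford A B * ‖toLp 2 (X *ᵥ v)‖ ^ 2
      ≤ ‖star (X *ᵥ v) ⬝ᵥ (A + Complex.I • B) *ᵥ (X *ᵥ v)‖ := crawford_mul_norm_sq_le A B _
    _ = ‖star v ⬝ᵥ diagonal d *ᵥ v‖ := by rw [← dotProduct_mulVec_conjTranspose_mul_mul, hX]
    _ ≤ ‖toLp 2 v‖ ^ 2 := norm_dotProduct_diagonal_mulVec_le hd v

lemma specNorm_inv_le_mul_pencilNorm {n : ℕ} {A B X : Matrix (Fin n) (Fin n) ℂ}
    (hA : A.IsHermitian) (hB : B.IsHermitian) (hX : IsUnit X.det) {α β : Fin n → ℝ}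
    (hdA : Xᴴ * A * X = diagonal fun i => (α i : ℂ))
    (hdB : Xᴴ * B * X = diagonal fun i => (β i : ℂ))
    (hαβ : ∀ i, α i ^ 2 + β i ^ 2 = 1) :
    specNorm X⁻¹ ≤ specNorm X * pencilNorm A B := by
  have hcancel : ∀ {M D : Matrix (Fin n) (Fin n) ℂ}, Xᴴ * M * X = D →
      ∀ u, D *ᵥ X⁻¹ *ᵥ u = Xᴴ *ᵥ M *ᵥ u := by
    rintro M D rfl u
    rw [mulVec_mulVec, mulVec_mulVec, Matrix.mul_assoc, mul_nonsing_inv X hX, Matrix.mul_one]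
  have hsq : specNorm X⁻¹ ^ 2 ≤ (specNorm X * pencilNorm A B) ^ 2 := by
    refine specNorm_sq_le_of_forall (sq_nonneg _) fun u => ?_
    calc ‖toLp 2 (X⁻¹ *ᵥ u)‖ ^ 2
        = ‖toLp 2 (Xᴴ *ᵥ A *ᵥ u)‖ ^ 2 + ‖toLp 2 (Xᴴ *ᵥ B *ᵥ u)‖ ^ 2 := by
          rw [norm_sq_eq_norm_sq_diagonal_mulVec_add hαβ, hcancel hdA, hcancel hdB]
      _ ≤ specNorm X ^ 2 * (‖toLp 2 (A *ᵥ u)‖ ^ 2 + ‖toLp 2 (B *ᵥ u)‖ ^ 2) := by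
          rw [mul_add, ← specNorm_conjTranspose X]
          exact add_le_add (norm_sq_mulVec_le_specNorm _ _) (norm_sq_mulVec_le_specNorm _ _)
      _ ≤ specNorm X ^ 2 * (pencilNorm A B ^ 2 * ‖toLp 2 u‖ ^ 2) := by
          rw [pencilNorm_eq_specNorm_fromRows hA hB]
          gcongr
          exact norm_sq_add_norm_sq_le_specNorm_fromRows A B u
      _ = (specNorm X * pencilNorm A B) ^ 2 * ‖toLp 2 u‖ ^ 2 := by ring
  exact le_of_pow_le_pow_left₀ two_ne_zero
    (mul_nonneg (specNorm_nonneg X) (specNorm_nonneg _)) hsq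

theorem eigenvector_conditioning {n : ℕ} (A B : Matrix (Fin n) (Fin n) ℂ)
    (hA : A.IsHermitian) (hB : B.IsHermitian) (hdef : 0 < crawford A B)
    (X : Matrix (Fin n) (Fin n) ℂ) (hX : IsUnit X.det)
    (α β : Fin n → ℝ)
    (hdA : Xᴴ * A * X = Matrix.diagonal fun i => (α i : ℂ))
    (hdB : Xᴴ * B * X = Matrix.diagonal fun i => (β i : ℂ))
    (hnorm : ∀ i, α i ^ 2 + β i ^ 2 = 1) :
    specNorm X ^ 2 ≤ (crawford A B)⁻¹ ∧
    specNorm X⁻¹ ^ 2 ≤ (crawford A B)⁻¹ * pencilNorm A B ^ 2 ∧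
    specNorm X * specNorm X⁻¹ ≤ pencilNorm A B / crawford A B := by
  have hd : ∀ i, ‖(α i : ℂ) + Complex.I * β i‖ ≤ 1 := fun i => by
    rw [mul_comm, Complex.norm_add_mul_I, hnorm i, Real.sqrt_one]
  have hdC : Xᴴ * (A + Complex.I • B) * X = diagonal fun i => (α i : ℂ) + Complex.I * β i := by
    rw [Matrix.mul_add, Matrix.add_mul, Matrix.mul_smul, Matrix.smul_mul, hdA, hdB,
      ← diagonal_smul, diagonal_add]
    rfl
  have hX2 : specNorm X ^ 2 ≤ (crawford A B)⁻¹ := specNorm_sq_le_inv_crawford hdef hd hdC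
  have hXinv : specNorm X⁻¹ ≤ specNorm X * pencilNorm A B :=
    specNorm_inv_le_mul_pencilNorm hA hB hX hdA hdB hnorm
  have hP : 0 ≤ pencilNorm A B := specNorm_nonneg _
  refine ⟨hX2, ?_, ?_⟩
  · calc specNorm X⁻¹ ^ 2 ≤ (specNorm X * pencilNorm A B) ^ 2 := by
          gcongr; exact specNorm_nonneg _
      _ = specNorm X ^ 2 * pencilNorm A B ^ 2 := mul_pow _ _ _
      _ ≤ (crawford A B)⁻¹ * pencilNorm A B ^ 2 := by gcongr
  · calc specNorm X * specNorm X⁻¹ ≤ specNorm X * (specNorm X * pencilNorm A B) := by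
          gcongr; exact specNorm_nonneg _
      _ = specNorm X ^ 2 * pencilNorm A B := by ring
      _ ≤ (crawford A B)⁻¹ * pencilNorm A B := by gcongr
      _ = pencilNorm A B / crawford A B := (div_eq_inv_mul _ _).symm
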